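/- Let p be an odd positive integer and f : ℝ → ℝ a continuous function. If y : ℝ × ℝ → ℝ is a smooth solution of the derivative wave equation y_tt − y_xx = (y_t)^p + f(y) on ℝ × 𝕋 (i.e. 2π-periodic in x) which is quasi-periodic in time, then y does not depend on the time variable, i.e. y_t ≡ 0, so y(t, x) = c(x). Moreover, if f ≡ 0 then y is constant. -/

import Mathlib

open Real MeasureTheory intervalIntegral Set




lemma recurrence {m : ℕ} (ω : Fin m → ℝ) {ε : ℝ} (hε : 0 < ε) (N : ℕ) :
    ∃ (s : ℕ) (k : Fin m → ℤ), N ≤ s ∧ 1 ≤ s ∧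
      ∀ i, |ω i * s - 2 * π * k i| < ε := by
  obtain ⟨M, hM⟩ := exists_nat_gt (2 * π / ε)
  have h2π : (0:ℝ) < 2 * π := by positivity
  have hM0 : (0:ℝ) < M := lt_trans (by positivity) hM
  set a : ℕ → Fin m → ℝ := fun n i => ω i * n / (2 * π) with ha
  have hbound : ∀ n i, (0:ℤ) ≤ ⌊Int.fract (a n i) * M⌋ ∧ ⌊Int.fract (a n i) * M⌋ < M := by
    intro n i
    refine ⟨Int.floor_nonneg.mpr (mul_nonneg (Int.fract_nonneg _) hM0.le), ?_⟩
    apply Int.floor_lt.mpr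
    push_cast
    calc Int.fract (a n i) * M < 1 * M :=
          mul_lt_mul_of_pos_right (Int.fract_lt_one _) hM0
      _ = M := one_mul _
  set g : ℕ → Fin m → Fin M := fun n i =>
    ⟨(⌊Int.fract (a n i) * M⌋).toNat, by have := hbound n i; omega⟩ with hgdef
  obtain ⟨z, hz⟩ := Finite.exists_infinite_fiber g
  have hinf : (g ⁻¹' {z}).Infinite := Set.infinite_coe_iff.mp hz
  obtain ⟨n, hn⟩ := hinf.nonempty
  obtain ⟨n', hn', hgt⟩ := hinf.exists_gt (n + N)
  have hle : n ≤ n' := by omega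
  have hfloor : ∀ i, ⌊Int.fract (a n i) * M⌋ = ⌊Int.fract (a n' i) * M⌋ := by
    intro i
    have h1 : g n i = g n' i := by
      have e1 : g n = z := hn
      have e2 : g n' = z := hn'
      rw [e1, e2]
    have h2 : (⌊Int.fract (a n i) * M⌋).toNat = (⌊Int.fract (a n' i) * M⌋).toNat :=
      congrArg Fin.val h1
    have b1 := hbound n i
    have b2 := hbound n' i
    omega
  refine ⟨n' - n, fun i => ⌊a n' i⌋ - ⌊a n i⌋, by omega, by omega, ?_⟩
  intro i
  have hcast : ((n' - n : ℕ) : ℝ) = (n' : ℝ) - n := by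
    push_cast [Nat.cast_sub hle]; ring
  have haeq : ∀ nn : ℕ, ω i * nn = 2 * π * a nn i := by
    intro nn
    rw [ha]
    field_simp
  have hfr : |Int.fract (a n' i) - Int.fract (a n i)| < 1 / M := by
    have h1 : |Int.fract (a n' i) * M - Int.fract (a n i) * M| < 1 :=
      Int.abs_sub_lt_one_of_floor_eq_floor (hfloor i).symm
    rw [← sub_mul, abs_mul, abs_of_pos hM0] at h1
    rw [lt_div_iff₀ hM0]
    exact h1
  have hkey : ω i * ((n' - n : ℕ) : ℝ) - 2 * π * ((⌊a n' i⌋ - ⌊a n i⌋ : ℤ) : ℝ)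
      = 2 * π * (Int.fract (a n' i) - Int.fract (a n i)) := by
    rw [hcast, mul_sub, haeq, haeq, ← Int.self_sub_floor, ← Int.self_sub_floor]
    push_cast
    ring
  rw [show ((fun i => ⌊a n' i⌋ - ⌊a n i⌋) i : ℤ) = ⌊a n' i⌋ - ⌊a n i⌋ from rfl]
  rw [hkey, abs_mul, abs_of_pos h2π]
  calc 2 * π * |Int.fract (a n' i) - Int.fract (a n i)| < 2 * π * (1 / M) :=
        mul_lt_mul_of_pos_left hfr h2π
    _ < ε := by
        rw [div_lt_iff₀ hε] at hM
        rw [mul_one_div, div_lt_iff₀ hM0]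
        linarith [hM]




lemma const_of_monotone_qp {m : ℕ} (ω : Fin m → ℝ) (K : (Fin m → ℝ) → ℝ)
    (hK : Continuous K)
    (hKper : ∀ (θ : Fin m → ℝ) (k : Fin m → ℤ), K (θ + fun i => 2 * π * k i) = K θ)
    (E : ℝ → ℝ) (hE : ∀ t, E t = K (fun i => ω i * t)) (hmono : Monotone E) :
    ∀ t t', E t = E t' := by
  have h2π : (0:ℝ) < 2 * π := by positivity
  have hcomp : IsCompact (Set.pi univ fun _ : Fin m => Icc (0:ℝ) (2 * π)) :=
    isCompact_univ_pi fun _ => isCompact_Icc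
  have himg : BddAbove (K '' Set.pi univ fun _ : Fin m => Icc (0:ℝ) (2 * π)) :=
    (hcomp.image hK).bddAbove
  have hrange : range E ⊆ K '' Set.pi univ fun _ : Fin m => Icc (0:ℝ) (2 * π) := by
    rintro _ ⟨t, rfl⟩
    refine ⟨fun i => 2 * π * Int.fract (ω i * t / (2 * π)), ?_, ?_⟩
    · intro i _
      have hf0 := Int.fract_nonneg (ω i * t / (2 * π))
      have hf1 := Int.fract_lt_one (ω i * t / (2 * π))
      constructor
      · nlinarith
      · nlinarith
    · have harg : (fun i => ω i * t)
          = (fun i => 2 * π * Int.fract (ω i * t / (2 * π)))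
            + fun i => 2 * π * ((⌊ω i * t / (2 * π)⌋ : ℤ) : ℝ) := by
        funext i
        have : (⌊ω i * t / (2 * π)⌋ : ℝ) + Int.fract (ω i * t / (2 * π))
            = ω i * t / (2 * π) := Int.floor_add_fract _
        have h1 : 2 * π * (ω i * t / (2 * π)) = ω i * t := by field_simp
        simp only [Pi.add_apply]
        nlinarith [this]
      rw [hE, harg, hKper]
  have hbdd : BddAbove (range E) := himg.mono hrange
  have hL : ∀ t₀, E t₀ = ⨆ t, E t := by
    intro t₀
    set L := ⨆ t, E t with hLdef
    refine le_antisymm (le_ciSup hbdd t₀) ?_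
    by_contra hlt
    push_neg at hlt
    set ε : ℝ := (L - E t₀) / 2 with hεdef
    have hε : 0 < ε := by simp only [hεdef]; linarith
    obtain ⟨δ, hδ0, hδ⟩ := Metric.continuousAt_iff.mp hK.continuousAt ε hε
    obtain ⟨T, hT⟩ := exists_lt_of_lt_ciSup (show L - ε < L from by linarith)
    obtain ⟨N, hN⟩ := exists_nat_ge (T - t₀)
    obtain ⟨s, k, hsN, hs1, hsk⟩ := recurrence ω hδ0 N
    have hsr : (N:ℝ) ≤ (s:ℝ) := Nat.cast_le.mpr hsN
    have h1 : E T ≤ E (t₀ + s) := hmono (by linarith)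
    have h2 : E (t₀ + s) = K (fun i => ω i * t₀ + (ω i * s - 2 * π * k i)) := by
      rw [hE]
      rw [show (fun i => ω i * (t₀ + s))
          = (fun i => ω i * t₀ + (ω i * s - 2 * π * k i)) + fun i => 2 * π * (k i : ℝ) by
        funext i; simp only [Pi.add_apply]; ring]
      exact hKper _ _
    have hdist : dist (fun i => ω i * t₀ + (ω i * s - 2 * π * k i))
        (fun i => ω i * t₀) < δ := by
      rw [dist_pi_lt_iff hδ0]
      intro i
      rw [Real.dist_eq]
      simpa using hsk i
    have h3 := hδ hdist
    rw [Real.dist_eq, abs_lt] at h3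
    have h4 : E t₀ = K (fun i => ω i * t₀) := hE t₀
    linarith [h3.1, h3.2, hT, h1, h2 ▸ le_refl (E (t₀ + s))]
  intro t t'
  rw [hL t, hL t']




lemma zero_of_integral_zero {g : ℝ → ℝ} (hg : Continuous g) (h0 : ∀ x, 0 ≤ g x)
    (hper : Function.Periodic g (2 * π)) (hint : (∫ x in (0:ℝ)..2 * π, g x) = 0)
    (c : ℝ) : g c = 0 := by
  by_contra hne
  have hc : 0 < g c := (h0 c).lt_of_ne (Ne.symm hne)
  have h1 : (∫ x in (c - π)..(c - π) + 2 * π, g x) = 0 := by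
    rw [hper.intervalIntegral_add_eq (c - π) 0]
    simpa using hint
  obtain ⟨δ, hδ0, hδ⟩ := Metric.continuousAt_iff.mp hg.continuousAt (g c) hc
  set δ' : ℝ := min (δ / 2) (π / 2) with hδ'
  have hδ'0 : 0 < δ' := lt_min (by linarith) (by positivity)
  have hδ'δ : δ' < δ := lt_of_le_of_lt (min_le_left _ _) (by linarith)
  have hδ'π : δ' ≤ π := le_trans (min_le_right _ _) (by linarith [pi_pos])
  have hpos : ∀ x ∈ Ioo (c - δ') (c + δ'), 0 < g x := by
    intro x hx
    have hd : dist x c < δ := by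
      rw [Real.dist_eq, abs_lt]
      constructor <;> [linarith [hx.1]; linarith [hx.2]]
    have := hδ hd
    rw [Real.dist_eq, abs_lt] at this
    linarith [this.1]
  have hsmall : 0 < ∫ x in (c - δ')..(c + δ'), g x :=
    intervalIntegral_pos_of_pos_on (hg.intervalIntegrable _ _) hpos (by linarith)
  have hmono : (∫ x in (c - δ')..(c + δ'), g x) ≤ ∫ x in (c - π)..(c - π) + 2 * π, g x := by
    apply intervalIntegral.integral_mono_interval (by linarith) (by linarith) (by linarith)
    · filter_upwards with x using h0 x
    · exact hg.intervalIntegrable _ _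
  rw [h1] at hmono
  linarith

lemma hasDerivAt_param_integral (e et : ℝ → ℝ → ℝ) (a b : ℝ)
    (he : Continuous fun z : ℝ × ℝ => e z.1 z.2)
    (het : Continuous fun z : ℝ × ℝ => et z.1 z.2)
    (hd : ∀ t x, HasDerivAt (fun s => e s x) (et t x) t) (t₀ : ℝ) :
    HasDerivAt (fun t => ∫ x in a..b, e t x) (∫ x in a..b, et t₀ x) t₀ := by
  have hK : IsCompact (Icc (t₀ - 1) (t₀ + 1) ×ˢ uIcc a b) :=
    isCompact_Icc.prod isCompact_uIcc
  obtain ⟨C, hC⟩ := hK.exists_bound_of_continuousOn het.continuousOn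
  refine (intervalIntegral.hasDerivAt_integral_of_dominated_loc_of_deriv_le
    (F := fun t x => e t x) (F' := fun t x => et t x) (bound := fun _ => C)
    (Metric.ball_mem_nhds t₀ one_pos) ?_ ?_ ?_ ?_ ?_ ?_).2
  · filter_upwards with t
    exact ((he.comp (Continuous.prodMk_right t)).aestronglyMeasurable)
  · exact (he.comp (Continuous.prodMk_right t₀)).intervalIntegrable a b
  · exact ((het.comp (Continuous.prodMk_right t₀)).aestronglyMeasurable)
  · filter_upwards with x hx t ht
    have : (t, x) ∈ Icc (t₀ - 1) (t₀ + 1) ×ˢ uIcc a b := by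
      constructor
      · have := Metric.mem_ball.mp ht
        rw [Real.dist_eq, abs_lt] at this
        exact ⟨by linarith [this.1], by linarith [this.2]⟩
      · exact uIoc_subset_uIcc hx
    exact hC (t, x) this
  · exact intervalIntegrable_const
  · filter_upwards with x hx t ht
    exact hd t x


open Real MeasureTheory intervalIntegral Set

lemma hasDerivAt_fst_slice {E F : Type*} [NormedAddCommGroup E] [NormedSpace ℝ E]
    [NormedAddCommGroup F] [NormedSpace ℝ F]
    {g : E × ℝ → F} (hg : Differentiable ℝ g) {φ : ℝ → E} {φ' : E} {t : ℝ}
    (hφ : HasDerivAt φ φ' t) (x : ℝ) :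
    HasDerivAt (fun s => g (φ s, x)) (fderiv ℝ g (φ t, x) (φ', 0)) t :=
  (hg _).hasFDerivAt.comp_hasDerivAt t (hφ.prodMk (hasDerivAt_const t x))

lemma hasDerivAt_snd_slice {E F : Type*} [NormedAddCommGroup E] [NormedSpace ℝ E]
    [NormedAddCommGroup F] [NormedSpace ℝ F]
    {g : E × ℝ → F} (hg : Differentiable ℝ g) (c : E) (t : ℝ) :
    HasDerivAt (fun s => g (c, s)) (fderiv ℝ g (c, t) (0, 1)) t :=
  (hg _).hasFDerivAt.comp_hasDerivAt t ((hasDerivAt_const t c).prodMk (hasDerivAt_id t))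

lemma fderiv_translate {E F : Type*} [NormedAddCommGroup E] [NormedSpace ℝ E]
    [NormedAddCommGroup F] [NormedSpace ℝ F]
    {g : E → F} (hg : Differentiable ℝ g) {c : E} (h : ∀ z, g (z + c) = g z) (z : E) :
    fderiv ℝ g (z + c) = fderiv ℝ g z := by
  have h1 : HasFDerivAt (fun w => g (w + c)) (fderiv ℝ g (z + c)) z := by
    have hid : HasFDerivAt (fun w : E => w + c) (ContinuousLinearMap.id ℝ E) z :=
      (hasFDerivAt_id z).add_const c
    have hgc : HasFDerivAt g (fderiv ℝ g (z + c)) ((fun w : E => w + c) z) := by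
      simpa using (hg (z + c)).hasFDerivAt
    have h2 := hgc.comp z hid
    simpa [Function.comp_def] using h2
  have h2 : (fun w => g (w + c)) = g := funext h
  rw [h2] at h1
  exact h1.fderiv.symm

lemma lattice_invariant {m : ℕ} {G : (Fin m → ℝ) → ℝ}
    (hG : ∀ (θ : Fin m → ℝ) (i : Fin m),
      G (θ + (2 * π) • (Pi.single i 1 : Fin m → ℝ)) = G θ)
    (θ : Fin m → ℝ) (k : Fin m → ℤ) :
    G (θ + fun i => 2 * π * k i) = G θ := by
  have hstep : ∀ (j : ℤ) (i : Fin m) (θ : Fin m → ℝ),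
      G (θ + ((2 * π * j : ℝ)) • (Pi.single i 1 : Fin m → ℝ)) = G θ := by
    intro j i
    induction j using Int.induction_on with
    | zero => intro θ; norm_num
    | succ n ih =>
        intro θ
        have hs : ((2 * π * ((n : ℤ) + 1 : ℤ) : ℝ)) • (Pi.single i 1 : Fin m → ℝ)
            = ((2 * π * (n : ℤ) : ℝ)) • (Pi.single i 1 : Fin m → ℝ)
              + (2 * π) • (Pi.single i 1 : Fin m → ℝ) := by
          rw [← add_smul]; push_cast; ring_nf
        rw [hs, ← add_assoc, hG, ih]
    | pred n ih =>
        intro θ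
        have hs : ((2 * π * (-(n : ℤ) : ℤ) : ℝ)) • (Pi.single i 1 : Fin m → ℝ)
            = ((2 * π * (-(n : ℤ) - 1 : ℤ) : ℝ)) • (Pi.single i 1 : Fin m → ℝ)
              + (2 * π) • (Pi.single i 1 : Fin m → ℝ) := by
          rw [← add_smul]; push_cast; ring_nf
        calc G (θ + ((2 * π * (-(n : ℤ) - 1 : ℤ) : ℝ)) • (Pi.single i 1 : Fin m → ℝ))
            = G ((θ + ((2 * π * (-(n : ℤ) - 1 : ℤ) : ℝ)) • (Pi.single i 1 : Fin m → ℝ))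
                + (2 * π) • (Pi.single i 1 : Fin m → ℝ)) := (hG _ i).symm
          _ = G (θ + ((2 * π * (-(n : ℤ) : ℤ) : ℝ)) • (Pi.single i 1 : Fin m → ℝ)) := by
                rw [add_assoc, ← hs]
          _ = G θ := ih θ
  have hsum : ∀ (s : Finset (Fin m)) (θ : Fin m → ℝ),
      G (θ + ∑ i ∈ s, ((2 * π * k i : ℝ)) • (Pi.single i 1 : Fin m → ℝ)) = G θ := by
    intro s
    induction s using Finset.induction_on with
    | empty => intro θ; simp
    | @insert a s' hnotmem ih =>
        intro θ
        rw [Finset.sum_insert hnotmem, ← add_assoc, ih, hstep]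
  have hrep : (fun i => 2 * π * (k i : ℝ))
      = ∑ i ∈ Finset.univ, ((2 * π * k i : ℝ)) • (Pi.single i 1 : Fin m → ℝ) := by
    funext j
    rw [Finset.sum_apply]
    simp [Pi.single_apply, mul_ite]
  rw [hrep, hsum]



/-- Partial derivative in time of `y : ℝ × ℝ → ℝ`, `y = y (t, x)`. -/
noncomputable def ptime (y : ℝ × ℝ → ℝ) (t x : ℝ) : ℝ :=
  deriv (fun s => y (s, x)) t

/-- Partial derivative in space of `y : ℝ × ℝ → ℝ`, `y = y (t, x)`. -/
noncomputable def pspace (y : ℝ × ℝ → ℝ) (t x : ℝ) : ℝ :=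
  deriv (fun s => y (t, s)) x

/-- Second partial derivative in time. -/
noncomputable def ptime2 (y : ℝ × ℝ → ℝ) (t x : ℝ) : ℝ :=
  deriv (fun s => ptime y s x) t

/-- Second partial derivative in space. -/
noncomputable def pspace2 (y : ℝ × ℝ → ℝ) (t x : ℝ) : ℝ :=
  deriv (fun s => pspace y t s) x

/-- `y (t, x)` is quasi-periodic in time: `y (t, x) = F (ω t, x)` for a smooth
function `F` which is `2π`-periodic in each of its arguments. -/
def QuasiPeriodicInTime (y : ℝ × ℝ → ℝ) : Prop :=
  ∃ (m : ℕ) (ω : Fin m → ℝ) (F : (Fin m → ℝ) × ℝ → ℝ),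
    ContDiff ℝ (⊤ : ℕ∞) F ∧
    (∀ (θ : Fin m → ℝ) (x : ℝ) (i : Fin m),
        F (θ + (2 * Real.pi) • (Pi.single i 1 : Fin m → ℝ), x) = F (θ, x)) ∧
    (∀ (θ : Fin m → ℝ) (x : ℝ), F (θ, x + 2 * Real.pi) = F (θ, x)) ∧
    (∀ t x : ℝ, y (t, x) = F (fun i => ω i * t, x))

/-- Non-existence of quasi-periodic solutions of `y_tt - y_xx = y_t^p + f(y)` (p odd):
any smooth, spatially 2π-periodic, time-quasi-periodic solution satisfies `y_t ≡ 0`,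
and is constant if `f ≡ 0`. -/

theorem no_quasiperiodic_ytp
    (p : ℕ) (hp : Odd p) (hp0 : 0 < p)
    (f : ℝ → ℝ) (hf : Continuous f)
    (y : ℝ × ℝ → ℝ) (hy : ContDiff ℝ (⊤ : ℕ∞) y)
    (hper : ∀ t x : ℝ, y (t, x + 2 * Real.pi) = y (t, x))
    (hqp : QuasiPeriodicInTime y)
    (heq : ∀ t x : ℝ,
      ptime2 y t x - pspace2 y t x = (ptime y t x) ^ p + f (y (t, x))) :
    (∀ t x : ℝ, ptime y t x = 0) ∧
      ((∀ z : ℝ, f z = 0) → ∀ t x t' x' : ℝ, y (t, x) = y (t', x')) := by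
  obtain ⟨m, ω, F, hF, hFθ, hFx, hyF⟩ := hqp
  have hπ := Real.pi_pos
  have hyd : Differentiable ℝ y := hy.differentiable (by simp)
  have hD : ContDiff ℝ (⊤ : ℕ∞) (fderiv ℝ y) := hy.fderiv_right (by simp)
  set u : ℝ × ℝ → ℝ := fun z => fderiv ℝ y z (1, 0) with hudef
  set v : ℝ × ℝ → ℝ := fun z => fderiv ℝ y z (0, 1) with hvdef
  have hu : ContDiff ℝ (⊤ : ℕ∞) u := hD.clm_apply contDiff_const
  have hv : ContDiff ℝ (⊤ : ℕ∞) v := hD.clm_apply contDiff_const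
  have hud : Differentiable ℝ u := hu.differentiable (by simp)
  have hvd : Differentiable ℝ v := hv.differentiable (by simp)
  -- slice derivative helpers
  have sliceT : ∀ (g : ℝ × ℝ → ℝ), Differentiable ℝ g → ∀ t x : ℝ,
      HasDerivAt (fun s => g (s, x)) (fderiv ℝ g (t, x) (1, 0)) t := by
    intro g hg t x
    simpa using hasDerivAt_fst_slice hg (hasDerivAt_id t) x
  have sliceX : ∀ (g : ℝ × ℝ → ℝ), Differentiable ℝ g → ∀ t x : ℝ,
      HasDerivAt (fun s => g (t, s)) (fderiv ℝ g (t, x) (0, 1)) x :=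
    fun g hg t x => hasDerivAt_snd_slice hg t x
  have hptime : ∀ t x : ℝ, ptime y t x = u (t, x) := fun t x => (sliceT y hyd t x).deriv
  have hpspace : ∀ t x : ℝ, pspace y t x = v (t, x) := fun t x => (sliceX y hyd t x).deriv
  have hptime2 : ∀ t x : ℝ, ptime2 y t x = fderiv ℝ u (t, x) (1, 0) := by
    intro t x
    show deriv (fun s => ptime y s x) t = _
    rw [show (fun s => ptime y s x) = fun s => u (s, x) from funext fun s => hptime s x]
    exact (sliceT u hud t x).deriv
  have hpspace2 : ∀ t x : ℝ, pspace2 y t x = fderiv ℝ v (t, x) (0, 1) := by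
    intro t x
    show deriv (fun s => pspace y t s) x = _
    rw [show (fun s => pspace y t s) = fun s => v (t, s) from funext fun s => hpspace t s]
    exact (sliceX v hvd t x).deriv
  -- symmetry of second derivatives
  have hfd2 : ∀ (a b : ℝ × ℝ) (z : ℝ × ℝ),
      fderiv ℝ (fun w => fderiv ℝ y w a) z b = fderiv ℝ (fderiv ℝ y) z b a := by
    intro a b z
    have hD2 : HasFDerivAt (fderiv ℝ y) (fderiv ℝ (fderiv ℝ y) z) z :=
      ((hD.differentiable (by simp)) z).hasFDerivAt
    have h1 := ((ContinuousLinearMap.apply ℝ ℝ a).hasFDerivAt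
      (x := fderiv ℝ y z)).comp z hD2
    have h2 : HasFDerivAt (fun w => fderiv ℝ y w a)
        ((ContinuousLinearMap.apply ℝ ℝ a).comp (fderiv ℝ (fderiv ℝ y) z)) z := by
      simpa [Function.comp_def] using h1
    rw [h2.fderiv]
    rfl
  have hsym : ∀ z : ℝ × ℝ, fderiv ℝ u z (0, 1) = fderiv ℝ v z (1, 0) := by
    intro z
    have hD2 : HasFDerivAt (fderiv ℝ y) (fderiv ℝ (fderiv ℝ y) z) z :=
      ((hD.differentiable (by simp)) z).hasFDerivAt
    have hsymm := second_derivative_symmetric (fun w => (hyd w).hasFDerivAt) hD2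
      ((0:ℝ), (1:ℝ)) ((1:ℝ), (0:ℝ))
    rw [hudef, hvdef, hfd2, hfd2]
    exact hsymm
  -- spatial periodicity of u and v
  have hyper' : ∀ z : ℝ × ℝ, y (z + ((0:ℝ), 2 * Real.pi)) = y z := by
    intro z
    have hz : z + ((0:ℝ), 2 * Real.pi) = (z.1, z.2 + 2 * Real.pi) := by
      ext <;> simp
    rw [hz, hper]
  have hfderiv_per : ∀ z : ℝ × ℝ, fderiv ℝ y (z + ((0:ℝ), 2 * Real.pi)) = fderiv ℝ y z :=
    fderiv_translate hyd hyper'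
  have hu_per : ∀ t x : ℝ, u (t, x + 2 * Real.pi) = u (t, x) := by
    intro t x
    have hz : ((t, x) : ℝ × ℝ) + ((0:ℝ), 2 * Real.pi) = (t, x + 2 * Real.pi) := by
      ext <;> simp
    rw [hudef]
    simp only []
    rw [← hz, hfderiv_per]
  have hv_per : ∀ t x : ℝ, v (t, x + 2 * Real.pi) = v (t, x) := by
    intro t x
    have hz : ((t, x) : ℝ × ℝ) + ((0:ℝ), 2 * Real.pi) = (t, x + 2 * Real.pi) := by
      ext <;> simp
    rw [hvdef]
    simp only []
    rw [← hz, hfderiv_per]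
    -- antiderivative of f
  set Φ : ℝ → ℝ := fun z => ∫ s in (0:ℝ)..z, f s with hΦdef
  have hΦd : ∀ z : ℝ, HasDerivAt Φ (f z) z := by
    intro z
    exact intervalIntegral.integral_hasDerivAt_right (hf.intervalIntegrable _ _)
      (hf.stronglyMeasurableAtFilter _ _) hf.continuousAt
  have hΦc : Continuous Φ := continuous_iff_continuousAt.mpr fun z => (hΦd z).continuousAt
  -- the energy density and its time derivative
  set e : ℝ → ℝ → ℝ := fun t x => (u (t, x) ^ 2 + v (t, x) ^ 2) / 2 - Φ (y (t, x)) with hedef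
  set et : ℝ → ℝ → ℝ := fun t x =>
    u (t, x) * fderiv ℝ u (t, x) (1, 0) + v (t, x) * fderiv ℝ v (t, x) (1, 0)
      - f (y (t, x)) * u (t, x) with hetdef
  have hu1' : ContDiff ℝ (⊤ : ℕ∞) fun z : ℝ × ℝ => fderiv ℝ u z ((1:ℝ), (0:ℝ)) :=
    (hu.fderiv_right (by simp)).clm_apply contDiff_const
  have hu1 : Continuous fun z : ℝ × ℝ => fderiv ℝ u z ((1:ℝ), (0:ℝ)) := hu1'.continuous
  have hv1' : ContDiff ℝ (⊤ : ℕ∞) fun z : ℝ × ℝ => fderiv ℝ v z ((1:ℝ), (0:ℝ)) :=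
    (hv.fderiv_right (by simp)).clm_apply contDiff_const
  have hv1 : Continuous fun z : ℝ × ℝ => fderiv ℝ v z ((1:ℝ), (0:ℝ)) := hv1'.continuous
  have hu2' : ContDiff ℝ (⊤ : ℕ∞) fun z : ℝ × ℝ => fderiv ℝ u z ((0:ℝ), (1:ℝ)) :=
    (hu.fderiv_right (by simp)).clm_apply contDiff_const
  have hu2 : Continuous fun z : ℝ × ℝ => fderiv ℝ u z ((0:ℝ), (1:ℝ)) := hu2'.continuous
  have hv2' : ContDiff ℝ (⊤ : ℕ∞) fun z : ℝ × ℝ => fderiv ℝ v z ((0:ℝ), (1:ℝ)) :=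
    (hv.fderiv_right (by simp)).clm_apply contDiff_const
  have hv2 : Continuous fun z : ℝ × ℝ => fderiv ℝ v z ((0:ℝ), (1:ℝ)) := hv2'.continuous
  have he_cont : Continuous fun z : ℝ × ℝ => e z.1 z.2 := by
    have h1 : (fun z : ℝ × ℝ => e z.1 z.2)
        = fun z : ℝ × ℝ => (u z ^ 2 + v z ^ 2) / 2 - Φ (y z) := by
      funext z
      rw [hedef]
    rw [h1]
    exact (((hu.continuous.pow 2).add (hv.continuous.pow 2)).div_const 2).sub
      (hΦc.comp hy.continuous)
  have het_cont : Continuous fun z : ℝ × ℝ => et z.1 z.2 := by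
    have h1 : (fun z : ℝ × ℝ => et z.1 z.2)
        = fun z : ℝ × ℝ => u z * fderiv ℝ u z (1, 0) + v z * fderiv ℝ v z (1, 0)
            - f (y z) * u z := by
      funext z
      rw [hetdef]
    rw [h1]
    exact ((hu.continuous.mul hu1).add (hv.continuous.mul hv1)).sub
      ((hf.comp hy.continuous).mul hu.continuous)
  have hd : ∀ t x : ℝ, HasDerivAt (fun s => e s x) (et t x) t := by
    intro t x
    have hU := sliceT u hud t x
    have hV := sliceT v hvd t x
    have hY := sliceT y hyd t x
    have hYΦ : HasDerivAt (fun s => Φ (y (s, x))) (f (y (t, x)) * u (t, x)) t := by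
      have h1 := (hΦd (y (t, x))).comp t hY
      simpa [hudef, Function.comp_def] using h1
    have hsq : HasDerivAt (fun s => (u (s, x) ^ 2 + v (s, x) ^ 2) / 2)
        (u (t, x) * fderiv ℝ u (t, x) (1, 0) + v (t, x) * fderiv ℝ v (t, x) (1, 0)) t := by
      have h1 := ((hU.fun_pow 2).add (hV.fun_pow 2)).div_const 2
      convert h1 using 1
      · rfl
      · rfl
      · rfl
      · ring
    have h2 := hsq.sub hYΦ
    exact h2
  -- the energy and its derivative
  set E : ℝ → ℝ := fun t => ∫ x in (0:ℝ)..2 * Real.pi, e t x with hEdef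
  have hE' : ∀ t₀ : ℝ, HasDerivAt E (∫ x in (0:ℝ)..2 * Real.pi, et t₀ x) t₀ :=
    fun t₀ => hasDerivAt_param_integral e et 0 (2 * Real.pi) he_cont het_cont hd t₀
  -- the derivative equals the integral of u^(p+1)
  have hval : ∀ t : ℝ, (∫ x in (0:ℝ)..2 * Real.pi, et t x)
      = ∫ x in (0:ℝ)..2 * Real.pi, (u (t, x)) ^ (p + 1) := by
    intro t
    have hwc : Continuous fun x =>
        fderiv ℝ u (t, x) ((0:ℝ), (1:ℝ)) * v (t, x) + u (t, x) * fderiv ℝ v (t, x) ((0:ℝ), (1:ℝ)) := by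
      have c1 : Continuous fun x : ℝ => ((t, x) : ℝ × ℝ) := Continuous.prodMk_right t
      exact ((hu2.comp c1).mul (hv.continuous.comp c1)).add
        ((hu.continuous.comp c1).mul (hv2.comp c1))
    have hw : ∀ x : ℝ, HasDerivAt (fun s => u (t, s) * v (t, s))
        (fderiv ℝ u (t, x) (0, 1) * v (t, x) + u (t, x) * fderiv ℝ v (t, x) (0, 1)) x :=
      fun x => (sliceX u hud t x).mul (sliceX v hvd t x)
    have hwint : (∫ x in (0:ℝ)..2 * Real.pi,
        (fderiv ℝ u (t, x) (0, 1) * v (t, x) + u (t, x) * fderiv ℝ v (t, x) (0, 1)))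
        = u (t, 2 * Real.pi) * v (t, 2 * Real.pi) - u (t, 0) * v (t, 0) :=
      intervalIntegral.integral_eq_sub_of_hasDerivAt (fun x _ => hw x)
        (hwc.intervalIntegrable _ _)
    have h20u : u (t, 2 * Real.pi) = u (t, 0) := by
      have := hu_per t 0; rwa [zero_add] at this
    have h20v : v (t, 2 * Real.pi) = v (t, 0) := by
      have := hv_per t 0; rwa [zero_add] at this
    have hwzero : (∫ x in (0:ℝ)..2 * Real.pi,
        (fderiv ℝ u (t, x) (0, 1) * v (t, x) + u (t, x) * fderiv ℝ v (t, x) (0, 1))) = 0 := by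
      rw [hwint, h20u, h20v]; ring
    have hpt : ∀ x : ℝ, et t x = (u (t, x)) ^ (p + 1)
        + (fderiv ℝ u (t, x) (0, 1) * v (t, x) + u (t, x) * fderiv ℝ v (t, x) (0, 1)) := by
      intro x
      have heq' := heq t x
      rw [hptime2, hpspace2, hptime] at heq'
      have hsymx := hsym (t, x)
      have hexp : fderiv ℝ u (t, x) (1, 0)
          = u (t, x) ^ p + f (y (t, x)) + fderiv ℝ v (t, x) (0, 1) := by linarith
      rw [hetdef]
      simp only []
      rw [← hsymx, hexp, pow_succ]
      ring
    rw [intervalIntegral.integral_congr (g := fun x => (u (t, x)) ^ (p + 1)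
        + (fderiv ℝ u (t, x) (0, 1) * v (t, x) + u (t, x) * fderiv ℝ v (t, x) (0, 1)))
        (fun x _ => hpt x)]
    have hcu : Continuous fun x : ℝ => u (t, x) := hu.continuous.comp (Continuous.prodMk_right t)
    have hint1 : IntervalIntegrable (fun x : ℝ => u (t, x) ^ (p + 1)) volume 0 (2 * Real.pi) :=
      (hcu.pow _).intervalIntegrable _ _
    rw [intervalIntegral.integral_add hint1 (hwc.intervalIntegrable _ _), hwzero, add_zero]
  have hEdiff : Differentiable ℝ E := fun t => (hE' t).differentiableAt
  have hderivE : ∀ t : ℝ, deriv E t = ∫ x in (0:ℝ)..2 * Real.pi, (u (t, x)) ^ (p + 1) :=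
    fun t => by rw [(hE' t).deriv, hval t]
  have hmono : Monotone E := by
    apply monotone_of_deriv_nonneg hEdiff
    intro t
    rw [hderivE]
    apply intervalIntegral.integral_nonneg (by positivity)
    intro x _
    exact (hp.add_one).pow_nonneg _
  -- quasi-periodic representation of the energy
  have hFd : Differentiable ℝ F := hF.differentiable (by simp)
  set A : (Fin m → ℝ) × ℝ → ℝ := fun z => fderiv ℝ F z (ω, 0) with hAdef
  set B : (Fin m → ℝ) × ℝ → ℝ := fun z => fderiv ℝ F z (0, 1) with hBdef
  have hA' : ContDiff ℝ (⊤ : ℕ∞) A := (hF.fderiv_right (by simp)).clm_apply contDiff_const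
  have hB' : ContDiff ℝ (⊤ : ℕ∞) B := (hF.fderiv_right (by simp)).clm_apply contDiff_const
  have hAc : Continuous A := hA'.continuous
  have hBc : Continuous B := hB'.continuous
  have hωd : ∀ t : ℝ, HasDerivAt (fun s : ℝ => fun i => ω i * s) ω t := by
    intro t
    rw [hasDerivAt_pi]
    intro i
    simpa using (hasDerivAt_id t).const_mul (ω i)
  have huA : ∀ t x : ℝ, u (t, x) = A ((fun i => ω i * t), x) := by
    intro t x
    have h1 : (fun s => y (s, x)) = fun s => F ((fun i => ω i * s), x) :=
      funext fun s => hyF s x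
    have h2 := hasDerivAt_fst_slice hFd (hωd t) x
    have h3 : ptime y t x = A ((fun i => ω i * t), x) := by
      show deriv (fun s => y (s, x)) t = _
      rw [h1, hAdef]
      exact h2.deriv
    rw [← hptime t x]
    exact h3
  have hvB : ∀ t x : ℝ, v (t, x) = B ((fun i => ω i * t), x) := by
    intro t x
    have h1 : (fun s => y (t, s)) = fun s => F ((fun i => ω i * t), s) :=
      funext fun s => hyF t s
    have h2 := hasDerivAt_snd_slice hFd (fun i => ω i * t) x
    have h3 : pspace y t x = B ((fun i => ω i * t), x) := by
      show deriv (fun s => y (t, s)) x = _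
      rw [h1, hBdef]
      exact h2.deriv
    rw [← hpspace t x]
    exact h3
  set K : (Fin m → ℝ) → ℝ := fun θ =>
    ∫ x in (0:ℝ)..2 * Real.pi, ((A (θ, x) ^ 2 + B (θ, x) ^ 2) / 2 - Φ (F (θ, x))) with hKdef
  have hEK : ∀ t : ℝ, E t = K (fun i => ω i * t) := by
    intro t
    rw [hEdef, hKdef]
    apply intervalIntegral.integral_congr
    intro x _
    rw [hedef]
    simp only []
    rw [huA, hvB, hyF]
  have hKc : Continuous K := by
    rw [hKdef]
    apply continuous_parametric_intervalIntegral_of_continuous'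
    have h1 : (Function.uncurry fun (θ : Fin m → ℝ) (x : ℝ) =>
        ((A (θ, x) ^ 2 + B (θ, x) ^ 2) / 2 - Φ (F (θ, x))))
        = fun z : (Fin m → ℝ) × ℝ => ((A z ^ 2 + B z ^ 2) / 2 - Φ (F z)) := by
      funext z
      simp [Function.uncurry]
    rw [h1]
    exact (((hAc.pow 2).add (hBc.pow 2)).div_const 2).sub (hΦc.comp hF.continuous)
  have hFlat : ∀ (k : Fin m → ℤ) (z : (Fin m → ℝ) × ℝ),
      F (z + ((fun i => 2 * Real.pi * (k i : ℝ)), 0)) = F z := by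
    intro k z
    have h1 := lattice_invariant (G := fun θ => F (θ, z.2))
      (fun θ i => hFθ θ z.2 i) z.1 k
    have hz : z + ((fun i => 2 * Real.pi * (k i : ℝ)), (0:ℝ))
        = ((z.1 + fun i => 2 * Real.pi * (k i : ℝ)), z.2) := by
      ext <;> simp
    rw [hz]
    exact h1.trans (by rw [Prod.mk.eta])
  have hKper : ∀ (θ : Fin m → ℝ) (k : Fin m → ℤ),
      K (θ + fun i => 2 * Real.pi * (k i : ℝ)) = K θ := by
    intro θ k
    rw [hKdef]
    apply intervalIntegral.integral_congr
    intro x _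
    simp only []
    have hzA : (((θ + fun i => 2 * Real.pi * (k i : ℝ)), x) : (Fin m → ℝ) × ℝ)
        = ((θ, x) : (Fin m → ℝ) × ℝ) + ((fun i => 2 * Real.pi * (k i : ℝ)), 0) := by
      ext <;> simp
    have hA2 : A (((θ, x) : (Fin m → ℝ) × ℝ) + ((fun i => 2 * Real.pi * (k i : ℝ)), 0))
        = A (θ, x) := by
      rw [hAdef]
      simp only []
      rw [fderiv_translate hFd (hFlat k) (θ, x)]
    have hB2 : B (((θ, x) : (Fin m → ℝ) × ℝ) + ((fun i => 2 * Real.pi * (k i : ℝ)), 0))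
        = B (θ, x) := by
      rw [hBdef]
      simp only []
      rw [fderiv_translate hFd (hFlat k) (θ, x)]
    rw [hzA, hA2, hB2, hFlat]
  -- energy is constant
  have hconst := const_of_monotone_qp ω K hKc hKper E hEK hmono
  have hderiv0 : ∀ t : ℝ, deriv E t = 0 := by
    intro t
    have hEfun : E = fun _ => E 0 := funext fun t' => hconst t' 0
    rw [hEfun]
    simp
  have hint0 : ∀ t : ℝ, (∫ x in (0:ℝ)..2 * Real.pi, (u (t, x)) ^ (p + 1)) = 0 := by
    intro t
    rw [← hderivE t]
    exact hderiv0 t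
  have hu0 : ∀ t x : ℝ, u (t, x) = 0 := by
    intro t x
    have hgc : Continuous fun x : ℝ => (u (t, x)) ^ (p + 1) :=
      ((hu.continuous.comp (Continuous.prodMk_right t)).pow _ :)
    have hper' : Function.Periodic (fun x : ℝ => (u (t, x)) ^ (p + 1)) (2 * Real.pi) :=
      fun x => by simp only []; rw [hu_per]
    have h0 := zero_of_integral_zero hgc (fun x => (hp.add_one).pow_nonneg _) hper'
      (hint0 t) x
    exact pow_eq_zero_iff (Nat.succ_ne_zero p) |>.mp h0
  refine ⟨fun t x => by rw [hptime]; exact hu0 t x, ?_⟩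
  intro hf0 t x t' x'
  have htime : ∀ (x t t' : ℝ), y (t, x) = y (t', x) := by
    intro x t t'
    apply is_const_of_deriv_eq_zero (f := fun s => y (s, x))
    · exact hyd.comp (differentiable_id.prodMk (differentiable_const x))
    · intro s
      rw [(sliceT y hyd s x).deriv]
      exact hu0 s x
  have hpspace2_0 : ∀ t x : ℝ, fderiv ℝ v (t, x) (0, 1) = 0 := by
    intro t x
    have h := heq t x
    rw [hf0] at h
    have hpt2 : ptime2 y t x = 0 := by
      show deriv (fun s => ptime y s x) t = 0
      rw [show (fun s => ptime y s x) = fun _ => (0:ℝ) from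
        funext fun s => by rw [hptime]; exact hu0 s x]
      simp
    have hptp : (ptime y t x) ^ p = 0 := by
      rw [hptime, hu0]
      exact zero_pow (by omega)
    rw [← hpspace2 t x]
    linarith [h, hpt2, hptp]
  have hvconst : ∀ t x : ℝ, v (t, x) = v (t, 0) := by
    intro t x
    apply is_const_of_deriv_eq_zero (f := fun s => v (t, s))
    · exact hvd.comp ((differentiable_const t).prodMk differentiable_id)
    · intro s
      rw [(sliceX v hvd t s).deriv]
      exact hpspace2_0 t s
  have hvzero : ∀ t x : ℝ, v (t, x) = 0 := by
    intro t x
    have hg : ∀ s : ℝ, HasDerivAt (fun s => y (t, s) - v (t, 0) * s) (0:ℝ) s := by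
      intro s
      have h1 := sliceX y hyd t s
      have h2 : HasDerivAt (fun s : ℝ => v (t, 0) * s) (v (t, 0)) s := by
        simpa using (hasDerivAt_id s).const_mul (v (t, 0))
      have h4 := h1.sub h2
      have h5 : fderiv ℝ y (t, s) (0, 1) - v (t, 0) = 0 := by
        rw [show fderiv ℝ y (t, s) ((0:ℝ), (1:ℝ)) = v (t, s) from rfl, hvconst t s]
        ring
      rw [h5] at h4
      exact h4
    have hgc : ∀ a b : ℝ, y (t, a) - v (t, 0) * a = y (t, b) - v (t, 0) * b :=
      is_const_of_deriv_eq_zero (fun s => (hg s).differentiableAt)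
        (fun s => (hg s).deriv)
    have h5 := hgc (0 + 2 * Real.pi) 0
    rw [hper t 0] at h5
    have hv0 : v (t, 0) = 0 := by
      have : v (t, 0) * (2 * Real.pi) = 0 := by linarith [h5]
      rcases mul_eq_zero.mp this with h | h
      · exact h
      · exfalso; nlinarith
    rw [hvconst t x, hv0]
  have hspace : ∀ (t a b : ℝ), y (t, a) = y (t, b) := by
    intro t a b
    apply is_const_of_deriv_eq_zero (f := fun s => y (t, s))
    · exact hyd.comp ((differentiable_const t).prodMk differentiable_id)
    · intro s
      rw [(sliceX y hyd t s).deriv]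
      exact hvzero t s
  calc y (t, x) = y (t', x) := htime x t t'
    _ = y (t', x') := hspace t' x x'
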